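/- arXiv:math/0209296 — 10 statements merged into one kernel-verified Lean document; each statement's English description precedes it below -/
import Mathlib

section
/- Let $B$ be a commutative ring, let $\mathfrak{a}_0, \ldots, \mathfrak{a}_r$ be ideals of $B$ and let $F_0, \ldots, F_r$ be multiplicatively closed subsets of $B$. Define the sets $S_{r+1}, S_r, \ldots, S_0$ inductively as in the context. Then each $S_i$ is a multiplicatively closed subset of $B$, and $S_{i+1} \subseteq S_i$ for all $i = 0, \ldots, r$. -/
open Pointwise

/-- Each `S i` is multiplicatively closed and `S (i+1) ⊆ S i`. -/
theorem stmt_0 {B : Type*} [CommRing B] (r : ℕ)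
    (a : ℕ → Ideal B) (F : ℕ → Set B) (S : ℕ → Set B)
    (hF : ∀ i ≤ r, (1 : B) ∈ F i ∧ ∀ x ∈ F i, ∀ y ∈ F i, x * y ∈ F i)
    (hStop : S (r + 1) = {1})
    (hSdef : ∀ i ≤ r, S i =
      {s : B | (((Ideal.span {s} ⊔ a i : Ideal B) : Set B) ∩ (F i * S (i + 1))).Nonempty}) :
    (∀ i ≤ r + 1, (1 : B) ∈ S i ∧ ∀ x ∈ S i, ∀ y ∈ S i, x * y ∈ S i) ∧
    (∀ i ≤ r, S (i + 1) ⊆ S i) := by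
  have key : ∀ k i, i + k = r + 1 →
      (1 : B) ∈ S i ∧ ∀ x ∈ S i, ∀ y ∈ S i, x * y ∈ S i := by
    intro k
    induction k with
    | zero =>
      intro i hi
      have : i = r + 1 := by omega
      subst this
      rw [hStop]
      refine ⟨rfl, ?_⟩
      intro x hx y hy
      simp only [Set.mem_singleton_iff] at hx hy ⊢
      rw [hx, hy, one_mul]
    | succ k ih =>
      intro i hi
      have hir : i ≤ r := by omega
      have ih' := ih (i + 1) (by omega)
      constructor
      · rw [hSdef i hir]
        refine ⟨1 * 1, ?_, Set.mul_mem_mul (hF i hir).1 ih'.1⟩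
        have : (1 : B) ∈ (Ideal.span {(1:B)} ⊔ a i : Ideal B) := by
          simp [Ideal.span_singleton_one]
        simpa using this
      · intro x hx y hy
        rw [hSdef i hir] at hx hy ⊢
        obtain ⟨u, hu1, hu2⟩ := hx
        obtain ⟨v, hv1, hv2⟩ := hy
        refine ⟨u * v, ?_, ?_⟩
        · have hu1' : u ∈ (Ideal.span {x} ⊔ a i : Ideal B) := hu1
          have hv1' : v ∈ (Ideal.span {y} ⊔ a i : Ideal B) := hv1
          obtain ⟨p, hp, q, hq, rfl⟩ := Submodule.mem_sup.mp hu1'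
          obtain ⟨p', hp', q', hq', rfl⟩ := Submodule.mem_sup.mp hv1'
          obtain ⟨c, rfl⟩ := Ideal.mem_span_singleton'.mp hp
          obtain ⟨d, rfl⟩ := Ideal.mem_span_singleton'.mp hp'
          show _ ∈ (Ideal.span {x * y} ⊔ a i : Ideal B)
          refine Submodule.mem_sup.mpr ⟨(c * d) * (x * y),
            Ideal.mem_span_singleton'.mpr ⟨c * d, rfl⟩,
            c * x * q' + q * (d * y + q'), ?_, by ring⟩
          exact add_mem (Ideal.mul_mem_left _ _ hq') (Ideal.mul_mem_right _ _ hq)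
        · obtain ⟨f, hf, s, hs, rfl⟩ := hu2
          obtain ⟨g, hg, t, ht, rfl⟩ := hv2
          have : f * s * (g * t) = (f * g) * (s * t) := by ring
          rw [this]
          exact Set.mul_mem_mul ((hF i hir).2 f hf g hg) (ih'.2 s hs t ht)
  constructor
  · intro i hi
    exact key (r + 1 - i) i (by omega)
  · intro i hi x hx
    rw [hSdef i hi]
    refine ⟨1 * x, ?_, Set.mul_mem_mul (hF i hi).1 hx⟩
    have : (1 : B) * x ∈ (Ideal.span {x} ⊔ a i : Ideal B) :=
      Ideal.mem_sup_left (Ideal.mem_span_singleton'.mpr ⟨1, rfl⟩)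
    exact this
end

section
/- Let $B$ be a commutative ring, let $\mathfrak{a}_0, \ldots, \mathfrak{a}_r$ be ideals of $B$ and let $F_0, \ldots, F_r$ be multiplicatively closed subsets of $B$. Define the sets $S_{r+1}, S_r, \ldots, S_0$ inductively as in the context. Then $0 \notin S_0$ if and only if $\mathfrak{a}_i \cap F_i \cdot S_{i+1} = \emptyset$ for every $i = 0, \ldots, r$. -/
open Pointwise

/-- `0 ∉ S 0` iff `a i ∩ F i * S (i+1) = ∅` for all `i ≤ r`. -/
theorem stmt_1 {B : Type*} [CommRing B] (r : ℕ)
    (a : ℕ → Ideal B) (F : ℕ → Set B) (S : ℕ → Set B)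
    (hF : ∀ i ≤ r, (1 : B) ∈ F i ∧ ∀ x ∈ F i, ∀ y ∈ F i, x * y ∈ F i)
    (hStop : S (r + 1) = {1})
    (hSdef : ∀ i ≤ r, S i =
      {s : B | (((Ideal.span {s} ⊔ a i : Ideal B) : Set B) ∩ (F i * S (i + 1))).Nonempty}) :
    (0 : B) ∉ S 0 ↔ ∀ i ≤ r, ((a i : Set B) ∩ (F i * S (i + 1))) = ∅ := by
  have key : ∀ j, j ≤ r → (0 : B) ∈ S j → (0 : B) ∈ S 0 := by
    intro j
    induction j with
    | zero => exact fun _ h => h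
    | succ n ih =>
      intro hn h0
      refine ih (by omega) ?_
      rw [hSdef n (by omega)]
      refine ⟨0, ?_, ?_⟩
      · exact (Ideal.span {(0:B)} ⊔ a n).zero_mem
      · exact ⟨1, (hF n (by omega)).1, 0, h0, by ring⟩
  constructor
  · intro h0 i hi
    by_contra hne
    rw [← Ne, Set.nonempty_iff_ne_empty.symm] at hne
    apply h0
    apply key i hi
    rw [hSdef i hi]
    obtain ⟨x, hx1, hx2⟩ := hne
    exact ⟨x, Ideal.mem_sup_right hx1, hx2⟩
  · intro h h0
    rw [hSdef 0 (Nat.zero_le r)] at h0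
    obtain ⟨x, hx1, hx2⟩ := h0
    have hxa : x ∈ (a 0 : Set B) := by
      have : Ideal.span {(0:B)} ⊔ a 0 = a 0 := by
        simp [Ideal.span_le]
      rw [this] at hx1; exact hx1
    have : x ∈ ((a 0 : Set B) ∩ (F 0 * S 1)) := ⟨hxa, hx2⟩
    rw [h 0 (Nat.zero_le r)] at this
    exact this
end

section
/- Let $B$ be a commutative ring, let $\mathfrak{a}_0, \ldots, \mathfrak{a}_r$ be ideals of $B$ and let $F_0, \ldots, F_r$ be multiplicatively closed subsets of $B$. Define the sets $S_{r+1}, S_r, \ldots, S_0$ inductively as in the context. If $\mathfrak{a}_i \cap F_i \cdot S_{i+1} = \emptyset$ for every $i = 0, \ldots, r$, then there exists a chain of prime ideals $\mathfrak{q}_0 \subseteq \mathfrak{q}_1 \subseteq \ldots \subseteq \mathfrak{q}_r$ of $B$ such that $\mathfrak{a}_i \subseteq \mathfrak{q}_i$ and $\mathfrak{q}_i \cap F_i \cdot S_{i+1} = \emptyset$ for every $i$. -/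
open Pointwise

/-- If `a i ∩ F i * S (i+1) = ∅` for all `i`, there is a chain of primes
`q 0 ⊆ … ⊆ q r` with `a i ⊆ q i` and `q i ∩ F i * S (i+1) = ∅`. -/
theorem stmt_2 {B : Type*} [CommRing B] (r : ℕ)
    (a : ℕ → Ideal B) (F : ℕ → Set B) (S : ℕ → Set B)
    (hF : ∀ i ≤ r, (1 : B) ∈ F i ∧ ∀ x ∈ F i, ∀ y ∈ F i, x * y ∈ F i)
    (hStop : S (r + 1) = {1})
    (hSdef : ∀ i ≤ r, S i =
      {s : B | (((Ideal.span {s} ⊔ a i : Ideal B) : Set B) ∩ (F i * S (i + 1))).Nonempty})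
    (hdisj : ∀ i ≤ r, ((a i : Set B) ∩ (F i * S (i + 1))) = ∅) :
    ∃ q : ℕ → Ideal B, (∀ i ≤ r, (q i).IsPrime) ∧ (∀ i < r, q i ≤ q (i + 1)) ∧
      (∀ i ≤ r, a i ≤ q i) ∧ (∀ i ≤ r, ((q i : Set B) ∩ (F i * S (i + 1))) = ∅) := by
  classical
  -- The sets `S j` are multiplicatively closed and contain 1, by downward induction.
  have hS : ∀ d : ℕ, ∀ j : ℕ, j + d = r + 1 →
      (1 : B) ∈ S j ∧ ∀ x ∈ S j, ∀ y ∈ S j, x * y ∈ S j := by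
    intro d
    induction d with
    | zero =>
      intro j hj
      simp only [Nat.add_zero] at hj
      subst hj
      rw [hStop]
      constructor
      · rfl
      · rintro x rfl y rfl; simp
    | succ d ih =>
      intro j hj
      have hjr : j ≤ r := by omega
      have hnext := ih (j + 1) (by omega)
      rw [hSdef j hjr]
      constructor
      · refine ⟨1, ?_, ?_⟩
        · exact Submodule.mem_sup_left (Ideal.mem_span_singleton_self 1)
        · have : (1 : B) * 1 ∈ F j * S (j + 1) :=
            Set.mul_mem_mul (hF j hjr).1 hnext.1
          simpa using this
      · rintro x ⟨z, hz1, hz2⟩ y ⟨w, hw1, hw2⟩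
        refine ⟨z * w, ?_, ?_⟩
        · -- z ∈ span{x} ⊔ a j, w ∈ span{y} ⊔ a j ⇒ z*w ∈ span{x*y} ⊔ a j
          rw [SetLike.mem_coe, Submodule.mem_sup] at hz1 hw1 ⊢
          obtain ⟨u, hu, c, hc, rfl⟩ := hz1
          obtain ⟨v, hv, e, he, rfl⟩ := hw1
          rw [Ideal.mem_span_singleton'] at hu hv
          obtain ⟨p, rfl⟩ := hu
          obtain ⟨s, rfl⟩ := hv
          refine ⟨p * s * (x * y), Ideal.mem_span_singleton'.mpr ⟨p * s, rfl⟩,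
            p * x * e + c * (s * y) + c * e, ?_, by ring⟩
          exact (a j).add_mem ((a j).add_mem ((a j).mul_mem_left _ he)
            ((a j).mul_mem_right _ hc)) ((a j).mul_mem_right _ hc)
        · obtain ⟨f, hf, s, hs, rfl⟩ := hz2
          obtain ⟨g, hg, t, ht, rfl⟩ := hw2
          have : (f * g) * (s * t) ∈ F j * S (j + 1) :=
            Set.mul_mem_mul ((hF j hjr).2 f hf g hg) (hnext.2 s hs t ht)
          simpa [mul_assoc, mul_comm, mul_left_comm] using this
  -- For `i ≤ r`, the set `F i * S (i+1)` is a submonoid.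
  have hM : ∀ i ≤ r, ∃ M : Submonoid B, (M : Set B) = F i * S (i + 1) := by
    intro i hi
    have hSi := hS (r - i) (i + 1) (by omega)
    refine ⟨⟨⟨F i * S (i + 1), ?_⟩, ?_⟩, rfl⟩
    · rintro x y ⟨f, hf, s, hs, rfl⟩ ⟨g, hg, t, ht, rfl⟩
      have : (f * g) * (s * t) ∈ F i * S (i + 1) :=
        Set.mul_mem_mul ((hF i hi).2 f hf g hg) (hSi.2 s hs t ht)
      simpa [mul_assoc, mul_comm, mul_left_comm] using this
    · have : (1 : B) * 1 ∈ F i * S (i + 1) := Set.mul_mem_mul (hF i hi).1 hSi.1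
      simpa using this
  -- Key step: if `Q` is disjoint from `F i * S (i+1)`, then `Q ⊔ a (i+1)` is
  -- disjoint from `F (i+1) * S (i+2)`.
  have step : ∀ i : ℕ, i + 1 ≤ r → ∀ Q : Ideal B,
      ((Q : Set B) ∩ (F i * S (i + 1))) = ∅ →
      (((Q ⊔ a (i + 1) : Ideal B) : Set B) ∩ (F (i + 1) * S (i + 2))) = ∅ := by
    intro i hir Q hQ
    rw [Set.eq_empty_iff_forall_notMem]
    rintro z ⟨hz1, hz2⟩
    rw [SetLike.mem_coe, Submodule.mem_sup] at hz1
    obtain ⟨x, hx, c, hc, rfl⟩ := hz1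
    have hxS : x ∈ S (i + 1) := by
      rw [hSdef (i + 1) hir]
      refine ⟨x + c, ?_, hz2⟩
      exact Submodule.add_mem_sup (Ideal.mem_span_singleton_self x) hc
    have hxFS : x ∈ F i * S (i + 1) := by
      have : (1 : B) * x ∈ F i * S (i + 1) :=
        Set.mul_mem_mul (hF i (by omega)).1 hxS
      simpa using this
    exact Set.eq_empty_iff_forall_notMem.mp hQ x ⟨hx, hxFS⟩
  -- Upward induction constructing the chain up to level n.
  have main : ∀ n ≤ r, ∃ q : ℕ → Ideal B, (∀ i ≤ n, (q i).IsPrime) ∧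
      (∀ i < n, q i ≤ q (i + 1)) ∧ (∀ i ≤ n, a i ≤ q i) ∧
      (∀ i ≤ n, ((q i : Set B) ∩ (F i * S (i + 1))) = ∅) := by
    intro n
    induction n with
    | zero =>
      intro _
      obtain ⟨M, hMeq⟩ := hM 0 (by omega)
      have hd : Disjoint ((a 0 : Ideal B) : Set B) (M : Set B) := by
        rw [Set.disjoint_iff_inter_eq_empty, hMeq]; exact hdisj 0 (by omega)
      obtain ⟨p, hp, hle, hpd⟩ := Ideal.exists_le_prime_disjoint (a 0) M hd
      refine ⟨fun _ => p, fun i hi => hp, by omega, ?_, ?_⟩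
      · intro i hi; interval_cases i; exact hle
      · intro i hi; interval_cases i
        rw [← hMeq]; exact Set.disjoint_iff_inter_eq_empty.mp hpd
    | succ n ih =>
      intro hn
      obtain ⟨q, hq1, hq2, hq3, hq4⟩ := ih (by omega)
      obtain ⟨M, hMeq⟩ := hM (n + 1) hn
      have hd : Disjoint (((q n ⊔ a (n + 1) : Ideal B)) : Set B) (M : Set B) := by
        rw [Set.disjoint_iff_inter_eq_empty, hMeq]
        exact step n hn (q n) (hq4 n le_rfl)
      obtain ⟨p, hp, hle, hpd⟩ := Ideal.exists_le_prime_disjoint _ M hd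
      refine ⟨fun i => if i ≤ n then q i else p, ?_, ?_, ?_, ?_⟩
      · intro i hi
        by_cases h : i ≤ n
        · simpa [h] using hq1 i h
        · simpa [h] using hp
      · intro i hi
        by_cases h : i + 1 ≤ n
        · simp only [show i ≤ n by omega, h, if_true]
          exact hq2 i (by omega)
        · have hin : i = n := by omega
          subst hin
          simp only [le_refl, if_true, h, if_false]
          exact le_trans le_sup_left hle
      · intro i hi
        by_cases h : i ≤ n
        · simpa [h] using hq3 i h
        · have : i = n + 1 := by omega
          subst this
          simp only [h, if_false]
          exact le_trans le_sup_right hle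
      · intro i hi
        by_cases h : i ≤ n
        · simpa [h] using hq4 i h
        · have : i = n + 1 := by omega
          subst this
          simp only [h, if_false]
          rw [← hMeq]; exact Set.disjoint_iff_inter_eq_empty.mp hpd
  exact main r le_rfl
end

section
/- Let $B$ be a commutative ring, let $\mathfrak{a}_0, \ldots, \mathfrak{a}_r$ be ideals of $B$ and let $F_0, \ldots, F_r$ be multiplicatively closed subsets of $B$. Define the sets $S_{r+1}, S_r, \ldots, S_0$ inductively as in the context. If there exists a chain of prime ideals $\mathfrak{q}_0 \subseteq \mathfrak{q}_1 \subseteq \ldots \subseteq \mathfrak{q}_r$ of $B$ such that $\mathfrak{a}_i \subseteq \mathfrak{q}_i$ and $\mathfrak{q}_i \cap F_i = \emptyset$ for every $i$, then $\mathfrak{q}_i \cap F_i \cdot S_{i+1} = \emptyset$ for every $i = 0, \ldots, r$. -/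
open Pointwise

/-- If there is a chain of primes `q 0 ⊆ … ⊆ q r` with `a i ⊆ q i` and
`q i ∩ F i = ∅`, then `q i ∩ F i * S (i+1) = ∅` for all `i ≤ r`. -/
theorem stmt_3 {B : Type*} [CommRing B] (r : ℕ)
    (a : ℕ → Ideal B) (F : ℕ → Set B) (S : ℕ → Set B)
    (hF : ∀ i ≤ r, (1 : B) ∈ F i ∧ ∀ x ∈ F i, ∀ y ∈ F i, x * y ∈ F i)
    (hStop : S (r + 1) = {1})
    (hSdef : ∀ i ≤ r, S i =
      {s : B | (((Ideal.span {s} ⊔ a i : Ideal B) : Set B) ∩ (F i * S (i + 1))).Nonempty})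
    (q : ℕ → Ideal B) (hprime : ∀ i ≤ r, (q i).IsPrime)
    (hchain : ∀ i < r, q i ≤ q (i + 1)) (hsub : ∀ i ≤ r, a i ≤ q i)
    (hdisjF : ∀ i ≤ r, ((q i : Set B) ∩ F i) = ∅) :
    ∀ i ≤ r, ((q i : Set B) ∩ (F i * S (i + 1))) = ∅ := by
  -- monotonicity of the chain
  have mono : ∀ i j, i ≤ j → j ≤ r → q i ≤ q j := by
    intro i j hij hjr
    induction j, hij using Nat.le_induction with
    | base => exact le_rfl
    | succ n hn ih =>
      exact (ih (le_trans (Nat.le_succ n) hjr)).trans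
        (hchain n (Nat.lt_of_succ_le hjr))
  have hFnot : ∀ i ≤ r, ∀ f ∈ F i, f ∉ q i := by
    intro i hi f hf hfq
    have := hdisjF i hi
    exact absurd (Set.mem_inter hfq hf) (by rw [this]; exact not_false)
  -- key lemma by downward induction
  have key : ∀ k j, j + k = r + 1 → ∀ s ∈ S j, ∀ i ≤ r, i < j → s ∉ q i := by
    intro k
    induction k with
    | zero =>
      intro j hj s hs i hi _
      simp only [Nat.add_zero] at hj
      subst hj
      rw [hStop] at hs
      rw [Set.mem_singleton_iff] at hs
      subst hs
      exact fun h => (hprime i hi).ne_top (Ideal.eq_top_iff_one _ |>.mpr h)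
    | succ k ih =>
      intro j hj s hs i hi hij
      have hjr : j ≤ r := by omega
      rw [hSdef j hjr] at hs
      obtain ⟨t, ht1, ht2⟩ := hs
      intro hsq
      have hsqj : s ∈ q j := mono i j (le_of_lt hij) hjr hsq
      -- t ∈ q j
      have htq : t ∈ q j := by
        rw [SetLike.mem_coe, Submodule.mem_sup] at ht1
        obtain ⟨y, hy, z, hz, rfl⟩ := ht1
        obtain ⟨b, rfl⟩ := Ideal.mem_span_singleton'.mp hy
        exact (q j).add_mem (Ideal.mul_mem_left _ b hsqj) (hsub j hjr hz)
      -- but t = f * s' with f ∉ q j and s' ∉ q j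
      obtain ⟨f, hf, s', hs', rfl⟩ := ht2
      rcases (hprime j hjr).mem_or_mem htq with h | h
      · exact hFnot j hjr f hf h
      · exact ih (j + 1) (by omega) s' hs' j hjr (Nat.lt_succ_self j) h
  intro i hi
  rw [Set.eq_empty_iff_forall_notMem]
  rintro x ⟨hxq, f, hf, s, hs, rfl⟩
  rcases (hprime i hi).mem_or_mem hxq with h | h
  · exact hFnot i hi f hf h
  · exact key (r - i) (i + 1) (by omega) s hs i hi (Nat.lt_succ_self i) h
end

section
/- Let $A$ and $B$ be commutative rings and let $\varphi : A \to B$ be a ring homomorphism such that $I = \varphi^{-1}(IB)$ holds for every ideal $I \subseteq A$. Then for every strictly increasing chain of prime ideals $\mathfrak{p}_0 \subset \mathfrak{p}_1 \subset \ldots \subset \mathfrak{p}_r$ of $A$ there exists a strictly increasing chain of prime ideals $\mathfrak{q}_0 \subset \mathfrak{q}_1 \subset \ldots \subset \mathfrak{q}_r$ of $B$ such that $\varphi^{-1}(\mathfrak{q}_i) = \mathfrak{p}_i$ for every $i = 0, \ldots, r$. -/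
/-!
Build ideals `E₀ ⊆ E₁ ⊆ ⋯` of `B` by `E₀ = 𝔭₀B` and
`E_{k+1} = 𝔭_{k+1}B + (E_k : φ(A ∖ 𝔭_k))`. Each `E_k` contracts to `𝔭_k`: an element of `E_k`
times some `φ c` lies in `JB` for an ideal `J` of `A` with `(J : c) ⊆ 𝔭_k`, and `JB` contracts
to `J`. A prime `𝔮_r ⊇ E_r` over `𝔭_r` exists because `E_r` misses `φ(A ∖ 𝔭_r)`; going down,
`𝔮_k` is a prime containing `E_k` and missing the multiplicative set `(B ∖ 𝔮_{k+1}) · φ(A ∖ 𝔭_k)`,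
which `E_k` misses since `(E_k : φ(A ∖ 𝔭_k)) ⊆ E_{k+1} ⊆ 𝔮_{k+1}`.
-/

open Ideal

section

variable {A B : Type*} [CommRing A] [CommRing B] (φ : A →+* B)

/-- The ideal `(J : φ(S))`. -/
def saturation (S : Submonoid A) (J : Ideal B) : Ideal B where
  carrier := {t | ∃ s ∈ S, t * φ s ∈ J}
  zero_mem' := ⟨1, S.one_mem, by simp⟩
  add_mem' := by
    rintro t t' ⟨s, hs, hts⟩ ⟨s', hs', hts'⟩
    refine ⟨s * s', S.mul_mem hs hs', ?_⟩
    have : (t + t') * φ (s * s') = t * φ s * φ s' + t' * φ s' * φ s := by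
      rw [map_mul]; ring
    rw [this]
    exact J.add_mem (J.mul_mem_right _ hts) (J.mul_mem_right _ hts')
  smul_mem' := by
    rintro c t ⟨s, hs, hts⟩
    refine ⟨s, hs, ?_⟩
    rw [smul_eq_mul, mul_assoc]
    exact J.mul_mem_left c hts

theorem exists_isPrime_comap_eq_of_disjoint {P : Ideal A} [P.IsPrime] {J : Ideal B}
    (M : Submonoid B) (hPJ : P ≤ J.comap φ)
    (hJM : Disjoint (J : Set B) ↑(M ⊔ P.primeCompl.map φ)) :
    ∃ Q : Ideal B, Q.IsPrime ∧ J ≤ Q ∧ Disjoint (Q : Set B) M ∧ Q.comap φ = P := by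
  obtain ⟨Q, hQ, hJQ, hQM⟩ := exists_le_prime_disjoint J _ hJM
  refine ⟨Q, hQ, hJQ, hQM.mono_right (SetLike.coe_subset_coe.mpr le_sup_left),
    le_antisymm (fun a ha => ?_) (hPJ.trans (comap_mono hJQ))⟩
  by_contra haP
  exact Set.disjoint_left.mp hQM ha (Submonoid.mem_sup_right ⟨a, haP, rfl⟩)

theorem exists_isPrime_le_comap_eq {P : Ideal A} [P.IsPrime] {J : Ideal B}
    (hJ : J.comap φ = P) : ∃ Q : Ideal B, Q.IsPrime ∧ J ≤ Q ∧ Q.comap φ = P := by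
  obtain ⟨Q, hQ, hJQ, -, hQP⟩ := exists_isPrime_comap_eq_of_disjoint φ ⊥ hJ.ge <| by
    rw [bot_sup_eq, Set.disjoint_left]
    rintro _ hJa ⟨a, haP, rfl⟩
    exact haP (hJ ▸ hJa)
  exact ⟨Q, hQ, hJQ, hQP⟩

theorem exists_isPrime_le_of_saturation_le {P : Ideal A} [P.IsPrime] {J Q : Ideal B}
    [Q.IsPrime] (hPJ : P ≤ J.comap φ) (hJQ : saturation φ P.primeCompl J ≤ Q) :
    ∃ Q' : Ideal B, Q'.IsPrime ∧ J ≤ Q' ∧ Q' ≤ Q ∧ Q'.comap φ = P := by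
  obtain ⟨Q', hQ', hJQ', hQ'Q, hQ'P⟩ := exists_isPrime_comap_eq_of_disjoint φ Q.primeCompl hPJ <| by
    rw [Set.disjoint_left]
    rintro _ hJx hx
    obtain ⟨t, htQ, _, ⟨a, ha, rfl⟩, rfl⟩ := Submonoid.mem_sup.mp hx
    exact htQ (hJQ ⟨a, ha, hJx⟩)
  refine ⟨Q', hQ', hJQ', fun t ht => ?_, hQ'P⟩
  by_contra htQ
  exact Set.disjoint_left.mp hQ'Q ht htQ

variable (p : ℕ → Ideal A) [hprime : ∀ k, (p k).IsPrime]

def liftingIdeal : ℕ → Ideal B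
  | 0 => (p 0).map φ
  | k + 1 => (p (k + 1)).map φ ⊔ saturation φ (p k).primeCompl (liftingIdeal k)

theorem map_le_liftingIdeal (k : ℕ) : (p k).map φ ≤ liftingIdeal φ p k := by
  cases k with
  | zero => exact le_rfl
  | succ k => exact le_sup_left

theorem saturation_le_liftingIdeal_succ (k : ℕ) :
    saturation φ (p k).primeCompl (liftingIdeal φ p k) ≤ liftingIdeal φ p (k + 1) :=
  le_sup_right

variable {φ p}

theorem exists_mul_mem_map_of_mem_liftingIdeal (hp : Monotone p) {k : ℕ} {t : B}
    (ht : t ∈ liftingIdeal φ p k) :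
    ∃ (c : A) (J : Ideal A), t * φ c ∈ J.map φ ∧ ∀ s, s * c ∈ J → s ∈ p k := by
  induction k generalizing t with
  | zero => exact ⟨1, p 0, by rwa [map_one, mul_one], fun s hs => by simpa using hs⟩
  | succ k ih =>
    obtain ⟨v, hv, u, ⟨b, hb, hub⟩, rfl⟩ := Submodule.mem_sup.mp ht
    obtain ⟨c, J, hJ, hJc⟩ := ih hub
    refine ⟨b * c, J ⊔ span {b * c} * p (k + 1), ?_, fun s hs => ?_⟩
    · have hv' : φ b * φ c * v ∈ (span {b * c} * p (k + 1)).map φ := by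
        rw [← map_mul, Ideal.map_mul, map_span, Set.image_singleton]
        exact mul_mem_mul (mem_span_singleton_self _) hv
      have hu' : u * φ b * φ c ∈ J.map φ := hJ
      rw [Ideal.map_sup, add_mul, mul_comm v, map_mul, ← mul_assoc]
      exact add_mem (Submodule.mem_sup_right hv') (Submodule.mem_sup_left hu')
    · obtain ⟨j, hj, _, hbcx, hsj⟩ := Submodule.mem_sup.mp hs
      obtain ⟨x, hx, rfl⟩ := mem_span_singleton_mul.mp hbcx
      have hsx : (s - x) * b * c ∈ J := by
        rwa [show (s - x) * b * c = j by linear_combination -hsj]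
      have hsx' : s - x ∈ p k :=
        ((hprime k).mem_or_mem (hJc _ hsx)).resolve_right hb
      simpa using add_mem (hp k.le_succ hsx') hx

theorem comap_liftingIdeal (hcontr : ∀ I : Ideal A, (I.map φ).comap φ = I) (hp : Monotone p)
    (k : ℕ) : (liftingIdeal φ p k).comap φ = p k := by
  refine le_antisymm (fun s hs => ?_) (map_le_iff_le_comap.mp (map_le_liftingIdeal φ p k))
  obtain ⟨c, J, hJ, hJc⟩ := exists_mul_mem_map_of_mem_liftingIdeal hp (mem_comap.mp hs)
  rw [← map_mul, ← mem_comap, hcontr] at hJ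
  exact hJc s hJ

theorem exists_isPrime_chain_comap_eq (m : ℕ) {Q : Ideal B} (hQ : Q.IsPrime)
    (hEQ : liftingIdeal φ p m ≤ Q) (hQm : Q.comap φ = p m) :
    ∃ q : ℕ → Ideal B, q m = Q ∧ (∀ k ≤ m, (q k).IsPrime ∧ (q k).comap φ = p k) ∧
      ∀ k < m, q k ≤ q (k + 1) := by
  induction m generalizing Q with
  | zero => exact ⟨fun _ => Q, rfl, fun k hk => by simpa [Nat.le_zero.mp hk] using ⟨hQ, hQm⟩,
      fun k hk => absurd hk k.not_lt_zero⟩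
  | succ m ih =>
    obtain ⟨Q', hQ', hEQ', hQ'Q, hQ'm⟩ := exists_isPrime_le_of_saturation_le φ
      (map_le_iff_le_comap.mp (map_le_liftingIdeal φ p m))
      ((saturation_le_liftingIdeal_succ φ p m).trans hEQ)
    obtain ⟨q, rfl, hq, hq_mono⟩ := ih hQ' hEQ' hQ'm
    refine ⟨fun k => if k ≤ m then q k else Q, by simp, fun k hk => ?_, fun k hk => ?_⟩
    · by_cases hkm : k ≤ m
      · simpa [hkm] using hq k hkm
      · obtain rfl : k = m + 1 := by omega
        simpa using ⟨hQ, hQm⟩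
    · by_cases hkm : k < m
      · simpa [hkm.le, Nat.succ_le_of_lt hkm] using hq_mono k hkm
      · obtain rfl : k = m := by omega
        simpa using hQ'Q

end

/-- If every ideal of `A` is contracted from `B`, then every strictly
increasing chain of primes of `A` lifts to a strictly increasing chain of primes of `B`. -/
theorem stmt_5 {A B : Type*} [CommRing A] [CommRing B] (φ : A →+* B)
    (hcontr : ∀ I : Ideal A, Ideal.comap φ (Ideal.map φ I) = I)
    (r : ℕ) (p : Fin (r + 1) → Ideal A) (hp : StrictMono p)
    (hprime : ∀ i, (p i).IsPrime) :
    ∃ q : Fin (r + 1) → Ideal B, StrictMono q ∧ (∀ i, (q i).IsPrime) ∧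
      ∀ i, Ideal.comap φ (q i) = p i := by
  let pn : ℕ → Ideal A := fun k => p (Fin.clamp k r)
  have hpn_prime : ∀ k, (pn k).IsPrime := fun k => hprime _
  have hpn_mono : Monotone pn := fun i j hij =>
    hp.monotone (Fin.le_def.mpr (min_le_min_right r hij))
  have hpn : ∀ i : Fin (r + 1), pn i = p i := fun i => congrArg p (Fin.ext (min_eq_left i.is_le))
  obtain ⟨Q, hQ, hEQ, hQr⟩ := exists_isPrime_le_comap_eq φ (comap_liftingIdeal hcontr hpn_mono r)
  obtain ⟨q, -, hq, hq_mono⟩ := exists_isPrime_chain_comap_eq r hQ hEQ hQr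
  have hq_comap : ∀ i : Fin (r + 1), (q i).comap φ = p i := fun i => (hq i i.is_le).2.trans (hpn i)
  refine ⟨fun i => q i, ?_, fun i => (hq i i.is_le).1, hq_comap⟩
  refine Monotone.strictMono_of_injective (Fin.monotone_iff_le_succ.mpr fun i => hq_mono i i.is_lt)
    fun i j hij => hp.injective ?_
  rw [← hq_comap, ← hq_comap]
  exact congrArg _ hij
end

section
/- Let $A$ be a commutative ring and let $B$ be a commutative $A$-algebra containing $A$ as a direct summand as an $A$-module. Then for every strictly increasing chain of prime ideals $\mathfrak{p}_0 \subset \mathfrak{p}_1 \subset \ldots \subset \mathfrak{p}_r$ of $A$ there exists a strictly increasing chain of prime ideals $\mathfrak{q}_0 \subset \mathfrak{q}_1 \subset \ldots \subset \mathfrak{q}_r$ of $B$ such that $\varphi^{-1}(\mathfrak{q}_i) = \mathfrak{p}_i$ for every $i$, where $\varphi : A \to B$ is the structure homomorphism. -/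
section DirectSummandChain

variable {A B : Type*} [CommRing A] [CommRing B] [Algebra A B]

/-- Saturation of an ideal `I` of `B` with respect to the multiplicative set `A \ p`. -/
def dsSat (p : Ideal A) (hp : p.IsPrime) (I : Ideal B) : Ideal B where
  carrier := {b | ∃ s, s ∉ p ∧ algebraMap A B s * b ∈ I}
  add_mem' := by
    rintro x y ⟨s, hs, hx⟩ ⟨t, ht, hy⟩
    refine ⟨s * t, fun h => ((hp.mem_or_mem h).elim hs ht), ?_⟩
    have heq : algebraMap A B (s * t) * (x + y) =
        algebraMap A B t * (algebraMap A B s * x) +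
          algebraMap A B s * (algebraMap A B t * y) := by
      rw [map_mul]; ring
    rw [heq]
    exact I.add_mem (I.mul_mem_left _ hx) (I.mul_mem_left _ hy)
  zero_mem' := ⟨1, fun h => hp.ne_top ((Ideal.eq_top_iff_one p).mpr h), by simp⟩
  smul_mem' := by
    rintro c x ⟨s, hs, hx⟩
    refine ⟨s, hs, ?_⟩
    rw [smul_eq_mul, mul_left_comm]
    exact I.mul_mem_left c hx

theorem mem_dsSat {p : Ideal A} {hp : p.IsPrime} {I : Ideal B} {b : B} :
    b ∈ dsSat p hp I ↔ ∃ s, s ∉ p ∧ algebraMap A B s * b ∈ I := Iff.rfl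

theorem le_dsSat {p : Ideal A} {hp : p.IsPrime} {I : Ideal B} : I ≤ dsSat p hp I := by
  intro b hb
  exact ⟨1, fun h => hp.ne_top ((Ideal.eq_top_iff_one p).mpr h), by simpa⟩

theorem dsSat_absorb {p : Ideal A} {hp : p.IsPrime} {I : Ideal B} {s : A} {t : B}
    (hs : s ∉ p) (h : algebraMap A B s * t ∈ dsSat p hp I) : t ∈ dsSat p hp I := by
  obtain ⟨s', hs', h'⟩ := h
  refine ⟨s' * s, fun hm => ((hp.mem_or_mem hm).elim hs' hs), ?_⟩
  rw [map_mul, mul_assoc]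
  exact h'

theorem pi_map (π : B →ₗ[A] A) (p : Ideal A) {b : B}
    (hb : b ∈ p.map (algebraMap A B)) : π b ∈ p := by
  have hb' : b ∈ p • (⊤ : Submodule A B) := by
    rw [Ideal.smul_top_eq_map]; exact hb
  refine Submodule.smul_induction_on hb' ?_ ?_
  · intro a ha x _
    rw [map_smul, smul_eq_mul]
    exact p.mul_mem_right _ ha
  · intro x y hx hy
    rw [map_add]
    exact p.add_mem hx hy

theorem pi_dsSat (π : B →ₗ[A] A) {p : Ideal A} {hp : p.IsPrime} {I : Ideal B}
    (hI : ∀ b ∈ I, π b ∈ p) : ∀ b ∈ dsSat p hp I, π b ∈ p := by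
  rintro b ⟨s, hs, hb⟩
  have h1 : s * π b ∈ p := by
    have h2 := hI _ hb
    rwa [← Algebra.smul_def, map_smul, smul_eq_mul] at h2
  exact (hp.mem_or_mem h1).resolve_left hs

theorem exists_prime_comap_eq_top (p : Ideal A) (hp : p.IsPrime) (N : Ideal B)
    (habs : ∀ s t, s ∉ p → algebraMap A B s * t ∈ N → t ∈ N)
    (hone : (1 : B) ∉ N)
    (hmap : p.map (algebraMap A B) ≤ N) :
    ∃ q : Ideal B, q.IsPrime ∧ N ≤ q ∧ Ideal.comap (algebraMap A B) q = p := by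
  haveI := hp
  set U : Submonoid B := p.primeCompl.map (algebraMap A B : A →* B) with hU
  have hdisj : Disjoint (N : Set B) (U : Set B) := by
    rw [Set.disjoint_left]
    rintro x hxN ⟨s, hs, rfl⟩
    exact hone (habs s 1 hs (by simpa))
  obtain ⟨q, hq, hNq, hqdisj⟩ := Ideal.exists_le_prime_disjoint N U hdisj
  refine ⟨q, hq, hNq, ?_⟩
  ext a
  simp only [Ideal.mem_comap]
  constructor
  · intro ha
    by_contra hap
    exact Set.disjoint_left.mp hqdisj ha ⟨a, hap, rfl⟩
  · intro ha
    exact hNq (hmap (Ideal.mem_map_of_mem _ ha))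

theorem exists_prime_comap_eq_le (p : Ideal A) (hp : p.IsPrime) (N : Ideal B)
    (habs : ∀ s t, s ∉ p → algebraMap A B s * t ∈ N → t ∈ N)
    (hmap : p.map (algebraMap A B) ≤ N)
    (q : Ideal B) (hq : q.IsPrime) (hNq : N ≤ q) :
    ∃ q' : Ideal B, q'.IsPrime ∧ q' ≤ q ∧ N ≤ q' ∧
      Ideal.comap (algebraMap A B) q' = p := by
  have h1p : (1 : A) ∉ p := fun h => hp.ne_top ((Ideal.eq_top_iff_one p).mpr h)
  have h1q : (1 : B) ∉ q := fun h => hq.ne_top ((Ideal.eq_top_iff_one q).mpr h)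
  set U : Submonoid B :=
    { carrier := {x | ∃ s, s ∉ p ∧ ∃ t, t ∉ q ∧ algebraMap A B s * t = x}
      one_mem' := ⟨1, h1p, 1, h1q, by simp⟩
      mul_mem' := by
        rintro x y ⟨s, hs, t, ht, rfl⟩ ⟨s', hs', t', ht', rfl⟩
        refine ⟨s * s', fun hm => ((hp.mem_or_mem hm).elim hs hs'),
          t * t', fun hm => ((hq.mem_or_mem hm).elim ht ht'), ?_⟩
        rw [map_mul]; ring } with hU
  have hdisj : Disjoint (N : Set B) (U : Set B) := by
    rw [Set.disjoint_left]
    rintro x hxN ⟨s, hs, t, ht, rfl⟩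
    exact ht (hNq (habs s t hs hxN))
  obtain ⟨q', hq', hNq', hqdisj⟩ := Ideal.exists_le_prime_disjoint N U hdisj
  have hle : q' ≤ q := by
    intro b hb
    by_contra hbq
    exact Set.disjoint_left.mp hqdisj hb ⟨1, h1p, b, hbq, by simp⟩
  refine ⟨q', hq', hle, hNq', ?_⟩
  ext a
  simp only [Ideal.mem_comap]
  constructor
  · intro ha
    by_contra hap
    exact Set.disjoint_left.mp hqdisj ha ⟨a, hap, 1, h1q, by simp⟩
  · intro ha
    exact hNq' (hmap (Ideal.mem_map_of_mem _ ha))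

theorem descend_chain {β : Type*} [Preorder β] (P : ℕ → β → Prop)
    (step : ∀ k x, P (k + 1) x → ∃ y, y ≤ x ∧ P k y) :
    ∀ n (x : β), P n x → ∃ f : ℕ → β, f n = x ∧
      (∀ i j, i ≤ j → j ≤ n → f i ≤ f j) ∧ ∀ i, i ≤ n → P i (f i) := by
  intro n
  induction n with
  | zero =>
    intro x hx
    refine ⟨fun _ => x, rfl, fun i j _ _ => le_refl x, fun i hi => ?_⟩
    have : i = 0 := Nat.le_zero.mp hi
    subst this; exact hx
  | succ n ih =>
    intro x hx
    obtain ⟨y, hyx, hy⟩ := step n x hx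
    obtain ⟨f, hfn, hmono, hprop⟩ := ih y hy
    refine ⟨fun i => if i ≤ n then f i else x, by simp, ?_, ?_⟩
    · intro i j hij hjn
      by_cases hj : j ≤ n
      · have hi : i ≤ n := hij.trans hj
        simpa [hi, hj] using hmono i j hij hj
      · by_cases hi : i ≤ n
        · simp only [hi, hj, if_true, if_false]
          calc f i ≤ f n := hmono i n hi le_rfl
          _ = y := hfn
          _ ≤ x := hyx
        · simp [hi, hj]
    · intro i hin
      by_cases hi : i ≤ n
      · simpa [hi] using hprop i hi
      · have hieq : i = n + 1 := by omega
        subst hieq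
        simpa [hi] using hx

end DirectSummandChain

/-- If `A` is a direct summand of the `A`-algebra `B`, then every strictly
increasing chain of primes of `A` lifts to a strictly increasing chain of primes of `B`. -/
theorem stmt_11 {A B : Type*} [CommRing A] [CommRing B] [Algebra A B]
    (π : B →ₗ[A] A) (hπ : ∀ a : A, π (algebraMap A B a) = a)
    (r : ℕ) (p : Fin (r + 1) → Ideal A) (hp : StrictMono p)
    (hprime : ∀ i, (p i).IsPrime) :
    ∃ q : Fin (r + 1) → Ideal B, StrictMono q ∧ (∀ i, (q i).IsPrime) ∧
      ∀ i, Ideal.comap (algebraMap A B) (q i) = p i := by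
  classical
  set φ := algebraMap A B with hφ
  set P : ℕ → Ideal A := fun k => p ⟨min k r, by omega⟩ with hPdef
  have hPprime : ∀ k, (P k).IsPrime := fun k => hprime _
  have hPmono : Monotone P := by
    intro i j hij
    exact hp.monotone (by rw [Fin.mk_le_mk]; omega)
  set N : ℕ → Ideal B := fun k => Nat.rec (dsSat (P 0) (hPprime 0) ((P 0).map φ))
      (fun k Nk => dsSat (P (k + 1)) (hPprime (k + 1)) (((P (k + 1)).map φ) ⊔ Nk)) k
    with hNdef
  have hN0 : N 0 = dsSat (P 0) (hPprime 0) ((P 0).map φ) := rfl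
  have hNsucc : ∀ k, N (k + 1) =
      dsSat (P (k + 1)) (hPprime (k + 1)) (((P (k + 1)).map φ) ⊔ N k) := fun _ => rfl
  have hmapN : ∀ k, (P k).map φ ≤ N k := by
    intro k
    cases k with
    | zero => exact le_dsSat
    | succ k => rw [hNsucc]; exact le_sup_left.trans le_dsSat
  have hNmono : ∀ k, N k ≤ N (k + 1) := by
    intro k
    rw [hNsucc]
    exact le_sup_right.trans le_dsSat
  have habsN : ∀ k s t, s ∉ P k → φ s * t ∈ N k → t ∈ N k := by
    intro k
    cases k with
    | zero => exact fun s t hs h => dsSat_absorb hs h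
    | succ k => exact fun s t hs h => dsSat_absorb hs h
  have hπN : ∀ k, ∀ b ∈ N k, π b ∈ P k := by
    intro k
    induction k with
    | zero => exact pi_dsSat π (fun b hb => pi_map π _ hb)
    | succ k ih =>
      rw [hNsucc]
      refine pi_dsSat π ?_
      intro b hb
      obtain ⟨x, hx, y, hy, rfl⟩ := Submodule.mem_sup.mp hb
      rw [map_add]
      exact (P (k + 1)).add_mem (pi_map π _ hx) (hPmono (Nat.le_succ k) (ih y hy))
  have honeN : ∀ k, (1 : B) ∉ N k := by
    intro k h
    have h1 := hπN k 1 h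
    rw [show (1 : B) = φ 1 by simp, hπ] at h1
    exact (hPprime k).ne_top ((Ideal.eq_top_iff_one _).mpr h1)
  set Q : ℕ → Ideal B → Prop :=
    fun k q => q.IsPrime ∧ N k ≤ q ∧ Ideal.comap φ q = P k with hQdef
  have hstep : ∀ k x, Q (k + 1) x → ∃ y, y ≤ x ∧ Q k y := by
    rintro k x ⟨hx, hNx, -⟩
    obtain ⟨q', h1, h2, h3, h4⟩ := exists_prime_comap_eq_le (P k) (hPprime k) (N k)
      (habsN k) (hmapN k) x hx ((hNmono k).trans hNx)
    exact ⟨q', h2, h1, h3, h4⟩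
  obtain ⟨x, hx1, hx2, hx3⟩ := exists_prime_comap_eq_top (P r) (hPprime r) (N r)
    (habsN r) (honeN r) (hmapN r)
  obtain ⟨f, -, hmono, hprop⟩ := descend_chain Q hstep r x ⟨hx1, hx2, hx3⟩
  have hPi : ∀ i : Fin (r + 1), P (i : ℕ) = p i := by
    intro i
    rw [hPdef]
    ext
    simp [Nat.min_eq_left (Fin.is_le i)]
  refine ⟨fun i => f i, ?_, ?_, ?_⟩
  · intro i j hij
    have hle : f i ≤ f j := hmono i j (Fin.le_def.mp hij.le) (Fin.is_le j)
    refine lt_of_le_of_ne hle ?_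
    intro heq
    have heq' : f (i : ℕ) = f (j : ℕ) := heq
    have hci := (hprop i (Fin.is_le i)).2.2
    have hcj := (hprop j (Fin.is_le j)).2.2
    rw [heq'] at hci
    have : P (i : ℕ) = P (j : ℕ) := hci.symm.trans hcj
    rw [hPi i, hPi j] at this
    exact hij.ne (hp.injective this)
  · intro i
    exact (hprop i (Fin.is_le i)).1
  · intro i
    rw [(hprop i (Fin.is_le i)).2.2, hPi]
end

section
/- Let $K$ be a field, let $B = K[X,Y,Z]$ be the polynomial ring in three variables, and let $A = K[XZ, YZ] \subseteq B$ be the $K$-subalgebra generated by $XZ$ and $YZ$. Then $A$ is a direct summand of $B$ as an $A$-module, i.e., there exists an $A$-linear map $\pi : B \to A$ restricting to the identity on $A$. -/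
open MvPolynomial

noncomputable section StmtAux

variable (K : Type*) [Field K]

/-- The weight function: `X, Y` have weight `1`, `Z` has weight `-1`. -/
def stmtW : Fin 3 → ℤ := ![1, 1, -1]

lemma stmtW_weight_apply (m : Fin 3 →₀ ℕ) :
    (Finsupp.weight stmtW) m = (m 0 : ℤ) + (m 1 : ℤ) - (m 2 : ℤ) := by
  rw [Finsupp.weight_apply, Finsupp.sum_fintype _ _ (fun i => zero_smul ℕ (stmtW i)),
    Fin.sum_univ_three]
  simp [stmtW]
  ring

/-- Membership in the degree-zero part gives `m 2 = m 0 + m 1` on the support. -/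
lemma stmtW_support_eq {p : MvPolynomial (Fin 3) K}
    (hp : p ∈ weightedHomogeneousSubmodule K stmtW 0) {m : Fin 3 →₀ ℕ}
    (hm : coeff m p ≠ 0) : m 2 = m 0 + m 1 := by
  have := hp hm
  rw [stmtW_weight_apply] at this
  omega

/-- Every monomial with `m 2 = m 0 + m 1` can be written with the generators. -/
lemma stmt_monomial_eq (m : Fin 3 →₀ ℕ) (hm : m 2 = m 0 + m 1) (c : K) :
    monomial m c = C c * (X 0 * X 2) ^ (m 0) * (X 1 * X 2) ^ (m 1) := by
  have hmeq : m = Finsupp.single (0 : Fin 3) (m 0) + Finsupp.single 1 (m 1)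
      + Finsupp.single 2 (m 2) := by
    ext i
    fin_cases i <;> simp [Finsupp.single_apply]
  conv_lhs => rw [hmeq]
  rw [show (C c * (X 0 * X 2) ^ (m 0) * (X 1 * X 2) ^ (m 1) : MvPolynomial (Fin 3) K)
      = C c * X 0 ^ (m 0) * X 1 ^ (m 1) * X 2 ^ (m 2) by rw [hm]; ring]
  simp only [C_apply, X_pow_eq_monomial, monomial_mul, mul_one, one_mul, zero_add]

/-- Degree-zero part is contained in the adjoined algebra. -/
lemma stmt_grade0_le (p : MvPolynomial (Fin 3) K)
    (hp : p ∈ weightedHomogeneousSubmodule K stmtW 0) :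
    p ∈ Algebra.adjoin K ({X 0 * X 2, X 1 * X 2} : Set (MvPolynomial (Fin 3) K)) := by
  classical
  rw [p.as_sum]
  apply Subalgebra.sum_mem
  intro m hm
  rw [mem_support_iff] at hm
  rw [stmt_monomial_eq K m (stmtW_support_eq K hp hm)]
  apply Subalgebra.mul_mem
  apply Subalgebra.mul_mem
  · exact Subalgebra.algebraMap_mem _ _
  · exact Subalgebra.pow_mem _ (Algebra.subset_adjoin (by simp)) _
  · exact Subalgebra.pow_mem _ (Algebra.subset_adjoin (by simp)) _

/-- The adjoined algebra is contained in the degree-zero part. -/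
lemma stmt_le_grade0 (p : MvPolynomial (Fin 3) K)
    (hp : p ∈ Algebra.adjoin K ({X 0 * X 2, X 1 * X 2} : Set (MvPolynomial (Fin 3) K))) :
    p ∈ weightedHomogeneousSubmodule K stmtW 0 := by
  induction hp using Algebra.adjoin_induction with
  | mem x hx =>
    rcases hx with hx | hx <;> subst hx
    · have := (isWeightedHomogeneous_X K stmtW 0).mul (isWeightedHomogeneous_X K stmtW 2)
      simpa [stmtW] using this
    · have := (isWeightedHomogeneous_X K stmtW 1).mul (isWeightedHomogeneous_X K stmtW 2)
      simpa [stmtW] using this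
  | algebraMap r => exact isWeightedHomogeneous_C stmtW r
  | add x y _ _ hx hy => exact Submodule.add_mem _ hx hy
  | mul x y _ _ hx hy => simpa using hx.mul hy

end StmtAux

set_option synthInstance.maxHeartbeats 2000000 in
set_option maxHeartbeats 2000000 in
/-- `A = K[XZ, YZ]` is a direct summand of `B = K[X,Y,Z]` as an `A`-module. -/
theorem stmt_12 (K : Type*) [Field K]
    (A : Subalgebra K (MvPolynomial (Fin 3) K))
    (hA : A = Algebra.adjoin K ({X 0 * X 2, X 1 * X 2} : Set (MvPolynomial (Fin 3) K))) :
    ∃ π : MvPolynomial (Fin 3) K →ₗ[A] A,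
      ∀ a : A, π (a : MvPolynomial (Fin 3) K) = a := by
  classical
  set 𝒜 := weightedHomogeneousSubmodule K (stmtW) with h𝒜
  letI : GradedAlgebra 𝒜 := weightedGradedAlgebra K stmtW
  have hmemA : ∀ a : A, (a : MvPolynomial (Fin 3) K) ∈ 𝒜 0 := fun a =>
    stmt_le_grade0 K _ (hA ▸ a.2)
  have hproj : ∀ p : MvPolynomial (Fin 3) K,
      (DirectSum.decompose 𝒜 p 0 : MvPolynomial (Fin 3) K) ∈ A := by
    intro p
    rw [hA]
    exact stmt_grade0_le K _ (SetLike.coe_mem _)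
  have hfix : ∀ a : A, (DirectSum.decompose 𝒜 (a : MvPolynomial (Fin 3) K) 0
      : MvPolynomial (Fin 3) K) = (a : MvPolynomial (Fin 3) K) := fun a =>
    DirectSum.decompose_of_mem_same 𝒜 (hmemA a)
  refine ⟨{ toFun := fun p => ⟨(DirectSum.decompose 𝒜 p 0 : MvPolynomial (Fin 3) K), hproj p⟩
            map_add' := ?_
            map_smul' := ?_ }, ?_⟩
  · intro p q
    ext
    simp
  · intro a p
    refine Subtype.ext ?_
    rw [RingHom.id_apply, smul_eq_mul, MulMemClass.coe_mul]
    show (DirectSum.decompose 𝒜 (a • p) 0 : MvPolynomial (Fin 3) K)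
      = (a : MvPolynomial (Fin 3) K) * (DirectSum.decompose 𝒜 p 0 : MvPolynomial (Fin 3) K)
    rw [Algebra.smul_def]
    have h := DirectSum.coe_decompose_mul_add_of_left_mem 𝒜 (i := 0) (j := 0)
      (hmemA a) (b := p)
    simpa using h
  · intro a
    exact Subtype.ext (hfix a)
end

section
/- Let $K$ be a field, let $B = K[X,Y,Z]$ be the polynomial ring in three variables, and let $A = K[XZ, YZ] \subseteq B$ be the $K$-subalgebra generated by $XZ$ and $YZ$. The ideal $ZB$ of $B$ is prime and its contraction to $A$ is the prime ideal of $A$ generated by $XZ$ and $YZ$, but there is no prime ideal $\mathfrak{q} \subseteq ZB$ of $B$ whose contraction to $A$ is the ideal of $A$ generated by $XZ$. In particular, the inclusion $A \subseteq B$ does not satisfy going down. -/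
/-!
Killing `Z`, resp. `X`, is a retraction of `B` that maps `A` into `A`, sending each generator
`XZ`, `YZ` either to `0` or to itself; hence an element of `A` differs from its image by an element
of the ideal of `A` spanned by the killed generators. This identifies the contraction of `(Z)` with
`(XZ, YZ)` and that of `(X)` with `(XZ)`, so both are prime and `(XZ) ⊊ (XZ, YZ)`. A prime
`q ⊆ (Z)` over `(XZ)` contains `XZ` but not `X`, hence contains `Z` and with it `YZ ∉ (XZ)`.
-/

open MvPolynomial

section Retraction

variable {R B : Type*} [CommRing R] [CommRing B] [Algebra R B] {A : Subalgebra R B}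

theorem Subalgebra.exists_apply_eq_and_sub_mem_span (φ : B →ₐ[R] B) {t₀ t₁ : Set A}
    (ht : Algebra.adjoin R (t₀ ∪ t₁) = ⊤) (h₀ : ∀ x ∈ t₀, φ x = 0) (h₁ : ∀ x ∈ t₁, φ x = x)
    (a : A) : ∃ b : A, φ a = b ∧ a - b ∈ Ideal.span t₀ := by
  induction (ht ▸ Algebra.mem_top : a ∈ Algebra.adjoin R (t₀ ∪ t₁)) using
    Algebra.adjoin_induction with
  | mem x hx =>
    rcases hx with hx | hx
    · exact ⟨0, h₀ x hx, by simpa using Ideal.subset_span hx⟩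
    · exact ⟨x, h₁ x hx, by simp⟩
  | algebraMap r => exact ⟨algebraMap R A r, φ.commutes r, by simp⟩
  | add x y _ _ hx hy =>
    obtain ⟨b, hb, hxb⟩ := hx
    obtain ⟨c, hc, hyc⟩ := hy
    refine ⟨b + c, by simp [hb, hc], ?_⟩
    rw [add_sub_add_comm]
    exact Ideal.add_mem _ hxb hyc
  | mul x y _ _ hx hy =>
    obtain ⟨b, hb, hxb⟩ := hx
    obtain ⟨c, hc, hyc⟩ := hy
    refine ⟨b * c, by simp [hb, hc], ?_⟩
    rw [show x * y - b * c = (x - b) * y + b * (y - c) by ring]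
    exact Ideal.add_mem _ (Ideal.mul_mem_right _ _ hxb) (Ideal.mul_mem_left _ _ hyc)

theorem Subalgebra.comap_eq_span_of_retraction (φ : B →ₐ[R] B) {t₀ t₁ : Set A}
    (ht : Algebra.adjoin R (t₀ ∪ t₁) = ⊤) (h₀ : ∀ x ∈ t₀, φ x = 0) (h₁ : ∀ x ∈ t₁, φ x = x)
    {P : Ideal B} (hP : P ≤ RingHom.ker φ) (ht₀ : ∀ x ∈ t₀, (x : B) ∈ P) :
    P.comap (algebraMap A B) = Ideal.span t₀ := by
  refine le_antisymm (fun a ha => ?_) (Ideal.span_le.2 ht₀)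
  obtain ⟨b, hb, hab⟩ := exists_apply_eq_and_sub_mem_span φ ht h₀ h₁ a
  have hb0 : b = 0 := Subtype.ext ((hb.symm.trans (hP ha)))
  simpa [hb0] using hab

end Retraction

theorem MvPolynomial.span_X_le_ker_aeval_update {σ R : Type*} [CommRing R] [DecidableEq σ]
    (i : σ) : Ideal.span {(X i : MvPolynomial σ R)} ≤
      RingHom.ker (aeval (Function.update X i 0) : MvPolynomial σ R →ₐ[R] MvPolynomial σ R) := by
  simp [Ideal.span_le]

theorem MvPolynomial.X_mul_X_dvd_X_mul_X_iff {σ R : Type*} [CommRing R] [IsDomain R]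
    {i j k : σ} : (X i * X k : MvPolynomial σ R) ∣ X j * X k ↔ i = j := by
  rw [mul_dvd_mul_iff_right (X_ne_zero k), X_dvd_X]

theorem MvPolynomial.isPrime_span_X {σ R : Type*} [CommRing R] [IsDomain R] (i : σ) :
    (Ideal.span {X i} : Ideal (MvPolynomial σ R)).IsPrime :=
  (Ideal.span_singleton_prime (X_ne_zero _)).2 X_prime

namespace GoingDownCounterexample

variable {K : Type*} [Field K] {A : Subalgebra K (MvPolynomial (Fin 3) K)} {u v : A}

theorem adjoin_eq_top
    (hA : A = Algebra.adjoin K ({X 0 * X 2, X 1 * X 2} : Set (MvPolynomial (Fin 3) K)))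
    (hu : (u : MvPolynomial (Fin 3) K) = X 0 * X 2)
    (hv : (v : MvPolynomial (Fin 3) K) = X 1 * X 2) :
    Algebra.adjoin K ({u} ∪ {v} : Set A) = ⊤ := by
  subst hA
  convert Algebra.adjoin_adjoin_coe_preimage using 2
  ext x
  simp [Subtype.ext_iff, hu, hv, or_comm]

theorem comap_span_X_two (hgen : Algebra.adjoin K ({u} ∪ {v} : Set A) = ⊤)
    (hu : (u : MvPolynomial (Fin 3) K) = X 0 * X 2)
    (hv : (v : MvPolynomial (Fin 3) K) = X 1 * X 2) :
    (Ideal.span {(X 2 : MvPolynomial (Fin 3) K)}).comap (algebraMap A _) = Ideal.span {u, v} := by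
  refine Subalgebra.comap_eq_span_of_retraction (aeval (Function.update X 2 0))
    (t₁ := ∅) (by rwa [Set.union_empty, Set.insert_eq]) ?_ (by simp)
    (span_X_le_ker_aeval_update 2) ?_ <;>
  · simp [hu, hv, Ideal.mem_span_singleton]

theorem comap_span_X_zero (hgen : Algebra.adjoin K ({u} ∪ {v} : Set A) = ⊤)
    (hu : (u : MvPolynomial (Fin 3) K) = X 0 * X 2)
    (hv : (v : MvPolynomial (Fin 3) K) = X 1 * X 2) :
    (Ideal.span {(X 0 : MvPolynomial (Fin 3) K)}).comap (algebraMap A _) = Ideal.span {u} :=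
  Subalgebra.comap_eq_span_of_retraction (aeval (Function.update X 0 0)) hgen
    (by simp [hu]) (by simp [hv]) (span_X_le_ker_aeval_update 0)
    (by simp [hu, Ideal.mem_span_singleton])

theorem notMem_span_singleton
    (hu : (u : MvPolynomial (Fin 3) K) = X 0 * X 2)
    (hv : (v : MvPolynomial (Fin 3) K) = X 1 * X 2) :
    v ∉ Ideal.span {u} := by
  intro h
  have := map_dvd A.val (Ideal.mem_span_singleton.1 h)
  simp [hu, hv, X_mul_X_dvd_X_mul_X_iff] at this

theorem not_exists_isPrime_le_span_X_two
    (hu : (u : MvPolynomial (Fin 3) K) = X 0 * X 2)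
    (hv : (v : MvPolynomial (Fin 3) K) = X 1 * X 2) :
    ¬ ∃ q : Ideal (MvPolynomial (Fin 3) K), q.IsPrime ∧ q ≤ Ideal.span {X 2} ∧
      q.comap (algebraMap A _) = Ideal.span {u} := by
  rintro ⟨q, hq, hqZ, hqu⟩
  have hXZ : (X 0 * X 2 : MvPolynomial (Fin 3) K) ∈ q := by
    simpa [hu] using hqu.ge (Ideal.mem_span_singleton_self u)
  rcases hq.mem_or_mem hXZ with hX | hZ
  · simpa [Ideal.mem_span_singleton] using hqZ hX
  · exact notMem_span_singleton hu hv (hqu ▸ by simpa [hv] using q.mul_mem_left (X 1) hZ)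

end GoingDownCounterexample

open GoingDownCounterexample

/-- `ZB` is prime, contracts to `(XZ, YZ) ⊆ A`, but no prime `q ⊆ ZB`
contracts to `(XZ) ⊆ A`; in particular `A ⊆ B` does not satisfy going down. -/
theorem stmt_14 (K : Type*) [Field K]
    (A : Subalgebra K (MvPolynomial (Fin 3) K))
    (hA : A = Algebra.adjoin K ({X 0 * X 2, X 1 * X 2} : Set (MvPolynomial (Fin 3) K)))
    (u v : A) (hu : (u : MvPolynomial (Fin 3) K) = X 0 * X 2)
    (hv : (v : MvPolynomial (Fin 3) K) = X 1 * X 2) :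
    (Ideal.span {X 2} : Ideal (MvPolynomial (Fin 3) K)).IsPrime ∧
    Ideal.comap (algebraMap A (MvPolynomial (Fin 3) K))
        (Ideal.span {X 2} : Ideal (MvPolynomial (Fin 3) K)) = Ideal.span {u, v} ∧
    (¬ ∃ q : Ideal (MvPolynomial (Fin 3) K), q.IsPrime ∧
        q ≤ Ideal.span {X 2} ∧
        Ideal.comap (algebraMap A (MvPolynomial (Fin 3) K)) q = Ideal.span {u}) ∧
    (¬ ∀ (p p' : Ideal A), p.IsPrime → p'.IsPrime → p < p' →
        ∀ q' : Ideal (MvPolynomial (Fin 3) K), q'.IsPrime →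
          Ideal.comap (algebraMap A (MvPolynomial (Fin 3) K)) q' = p' →
          ∃ q : Ideal (MvPolynomial (Fin 3) K), q.IsPrime ∧ q ≤ q' ∧
            Ideal.comap (algebraMap A (MvPolynomial (Fin 3) K)) q = p) := by
  have hgen := adjoin_eq_top hA hu hv
  have hZ := comap_span_X_two hgen hu hv
  have hlt : Ideal.span {u} < Ideal.span {u, v} :=
    lt_of_le_of_ne (Ideal.span_mono (by simp))
      fun h => notMem_span_singleton hu hv (h ▸ Ideal.subset_span (by simp))
  refine ⟨isPrime_span_X 2, hZ, not_exists_isPrime_le_span_X_two hu hv, fun H => ?_⟩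
  exact not_exists_isPrime_le_span_X_two hu hv <| H _ _
    (comap_span_X_zero hgen hu hv ▸ (isPrime_span_X 0).comap _)
    (hZ ▸ (isPrime_span_X 2).comap _) hlt _ (isPrime_span_X 2) hZ
end

section
/- Let $K$ be a field, let $B = K[X,Y,Z]$ be the polynomial ring in three variables, and let $A = K[XZ, YZ] \subseteq B$ be the $K$-subalgebra generated by $XZ$ and $YZ$. The ideal $(X, Y^2Z - 1)B$ of $B$ is prime and its contraction to $A$ is the prime ideal of $A$ generated by $XZ$, but there is no prime ideal $\mathfrak{q} \supseteq (X, Y^2Z-1)B$ of $B$ whose contraction to $A$ is the ideal of $A$ generated by $XZ$ and $YZ$. In particular, the inclusion $A \subseteq B$ does not satisfy going up. -/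
/-!
The ideal `(X, Y²Z - 1)` is the kernel of `B → K[T, T⁻¹]`, `(X, Y, Z) ↦ (0, T⁻¹, T²)`: modulo
the ideal, `YZ` is a unit with inverse `Y` and `Z = (YZ)²`, so `T ↦ YZ` inverts this map on the
quotient. On `A = K[XZ, YZ]` the map sends `XZ ↦ 0` and `YZ ↦ T`, which is transcendental over
`K`, so its kernel there is `(XZ)`. The ideal `(XZ, YZ)` of `A` is maximal, being the kernel of
evaluation at the origin, yet every ideal of `B` containing `YZ` and `Y²Z - 1` contains
`Y · YZ - (Y²Z - 1) = 1`.
-/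

open MvPolynomial LaurentPolynomial
open scoped Polynomial LaurentPolynomial

section TwoGenerated

variable {K S : Type*} [CommRing K] [CommRing S] [Algebra K S] {s t : S}

theorem exists_sub_aeval_mem_span_singleton (h : Algebra.adjoin K {s, t} = ⊤) (a : S) :
    ∃ p : K[X], a - Polynomial.aeval t p ∈ Ideal.span {s} := by
  let π := Ideal.Quotient.mkₐ K (Ideal.span {s})
  have hπa : π a ∈ Algebra.adjoin K {π t} := by
    have hmap : π a ∈ (Algebra.adjoin K {s, t}).map π := by
      rw [h]
      exact Subalgebra.mem_map.mpr ⟨a, trivial, rfl⟩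
    rw [AlgHom.map_adjoin, Set.image_pair] at hmap
    refine Algebra.adjoin_le (Set.insert_subset_iff.mpr ⟨?_, Algebra.subset_adjoin⟩) hmap
    rw [Ideal.Quotient.mkₐ_eq_mk,
      Ideal.Quotient.eq_zero_iff_mem.mpr (Ideal.mem_span_singleton_self s)]
    exact zero_mem _
  obtain ⟨p, hp⟩ := Algebra.adjoin_singleton_eq_range_aeval K (π t) ▸ hπa
  refine ⟨p, Ideal.Quotient.eq.mp ?_⟩
  rw [← Ideal.Quotient.mkₐ_eq_mk K, ← Polynomial.aeval_algHom_apply]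
  exact hp.symm

theorem exists_sub_algebraMap_mem_span_pair (h : Algebra.adjoin K {s, t} = ⊤) (a : S) :
    ∃ c : K, a - algebraMap K S c ∈ Ideal.span {s, t} := by
  obtain ⟨p, hp⟩ := exists_sub_aeval_mem_span_singleton h a
  obtain ⟨q, hq⟩ := Polynomial.X_dvd_sub_C (p := p)
  refine ⟨p.coeff 0, ?_⟩
  have htq : Polynomial.aeval t p - algebraMap K S (p.coeff 0) = t * Polynomial.aeval t q := by
    rw [← Polynomial.aeval_C, ← map_sub, hq, map_mul, Polynomial.aeval_X]
  have := Ideal.add_mem _ (Ideal.span_mono (Set.singleton_subset_iff.mpr (Set.mem_insert s {t})) hp)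
    (Ideal.mul_mem_right (Polynomial.aeval t q) _ (Ideal.subset_span (Set.mem_insert_of_mem s rfl)))
  rwa [← htq, sub_add_sub_cancel] at this

theorem AlgHom.ker_eq_span_singleton_of_adjoin_eq_top {R : Type*} [CommRing R] [Algebra K R]
    (φ : S →ₐ[K] R) (h : Algebra.adjoin K {s, t} = ⊤) (hs : φ s = 0)
    (ht : Transcendental K (φ t)) : RingHom.ker φ = Ideal.span {s} := by
  refine le_antisymm (fun a ha => ?_) ((Ideal.span_singleton_le_iff_mem _).mpr hs)
  obtain ⟨p, hp⟩ := exists_sub_aeval_mem_span_singleton h a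
  have hspan : Ideal.span {s} ≤ RingHom.ker φ := (Ideal.span_singleton_le_iff_mem _).mpr hs
  have hp0 : Polynomial.aeval (φ t) p = 0 := by
    rw [Polynomial.aeval_algHom_apply]
    simpa using Ideal.sub_mem _ ha (hspan hp)
  rw [transcendental_iff.mp ht p hp0, map_zero, sub_zero] at hp
  exact hp

theorem AlgHom.ker_eq_span_pair_of_adjoin_eq_top (χ : S →ₐ[K] K) (h : Algebra.adjoin K {s, t} = ⊤)
    (hs : χ s = 0) (ht : χ t = 0) : RingHom.ker χ = Ideal.span {s, t} := by
  have hspan : Ideal.span {s, t} ≤ RingHom.ker χ := by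
    rw [Ideal.span_le, Set.insert_subset_iff, Set.singleton_subset_iff]
    exact ⟨hs, ht⟩
  refine le_antisymm (fun a ha => ?_) hspan
  obtain ⟨c, hc⟩ := exists_sub_algebraMap_mem_span_pair h a
  have hc0 : c = 0 := by simpa [RingHom.mem_ker.mp ha] using hspan hc
  rwa [hc0, map_zero, sub_zero] at hc

end TwoGenerated

theorem Subalgebra.adjoin_pair_coe_preimage_eq_top {K S : Type*} [CommRing K] [CommRing S]
    [Algebra K S] {A : Subalgebra K S} {x y : S} (hA : A = Algebra.adjoin K {x, y})
    (u v : A) (hu : (u : S) = x) (hv : (v : S) = y) : Algebra.adjoin K {u, v} = ⊤ := by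
  subst hA
  convert Algebra.adjoin_adjoin_coe_preimage (R := K) (s := {x, y})
  ext w
  simp [Subtype.ext_iff, hu, hv]

theorem LaurentPolynomial.transcendental_T_one (K : Type*) [CommRing K] [Nontrivial K] :
    Transcendental K (T 1 : K[T;T⁻¹]) := by
  have h : Polynomial.aeval (T 1 : K[T;T⁻¹]) = Polynomial.toLaurentAlg :=
    Polynomial.algHom_ext (by simp [Polynomial.toLaurent_X])
  rw [transcendental_iff_injective, h]
  exact Polynomial.toLaurent_injective

section Curve

variable {K : Type*} [Field K]

local notation "𝔮" => (Ideal.span {X 0, X 1 ^ 2 * X 2 - 1} : Ideal (MvPolynomial (Fin 3) K))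

noncomputable def curveParam : MvPolynomial (Fin 3) K →ₐ[K] K[T;T⁻¹] :=
  aeval ![0, T (-1), T 2]

theorem curveIdeal_le_ker_curveParam : 𝔮 ≤ RingHom.ker (curveParam (K := K)) := by
  rw [Ideal.span_le, Set.insert_subset_iff, Set.singleton_subset_iff]
  refine ⟨by simp [curveParam], ?_⟩
  simp only [SetLike.mem_coe, RingHom.mem_ker, curveParam, map_sub, map_mul, map_pow, map_one,
    aeval_X]
  simp only [Matrix.cons_val, T_pow, ← T_add]
  norm_num

theorem eq_top_of_curveIdeal_le {q : Ideal (MvPolynomial (Fin 3) K)} (hle : 𝔮 ≤ q)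
    (h : X 1 * X 2 ∈ q) : q = ⊤ := by
  have hrel : X 1 ^ 2 * X 2 - 1 ∈ q := hle (Ideal.subset_span (by simp))
  refine (Ideal.eq_top_iff_one q).mpr ?_
  convert q.sub_mem (q.mul_mem_left (X 1) h) hrel using 1
  ring

theorem mk_X_one_mul_X_two_mul_mk_X_one :
    Ideal.Quotient.mk 𝔮 (X 1 * X 2) * Ideal.Quotient.mk 𝔮 (X 1) = 1 := by
  rw [← map_mul, ← map_one (Ideal.Quotient.mk 𝔮), Ideal.Quotient.eq]
  exact Ideal.subset_span (by simp [mul_comm, ← mul_assoc, sq])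

noncomputable def curveUnit : (MvPolynomial (Fin 3) K ⧸ 𝔮)ˣ :=
  Units.mkOfMulEqOne _ _ mk_X_one_mul_X_two_mul_mk_X_one

theorem eval₂_curveUnit_comp_curveParam :
    (LaurentPolynomial.eval₂ (algebraMap K _) curveUnit).comp (curveParam (K := K)).toRingHom =
      Ideal.Quotient.mk 𝔮 := by
  refine MvPolynomial.ringHom_ext (fun c => by simp [curveParam]; rfl) fun i => ?_
  fin_cases i
  · simpa [curveParam] using (Ideal.Quotient.eq_zero_iff_mem.mpr (Ideal.subset_span (by simp))).symm
  · simp [curveParam, curveUnit]; rfl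
  · simp [curveParam, curveUnit]
    rw [← map_mul, ← map_pow, Ideal.Quotient.eq]
    have hrel : X 1 ^ 2 * X 2 - 1 ∈ 𝔮 := Ideal.subset_span (by simp)
    convert Ideal.mul_mem_left _ (X 2) hrel using 1
    ring

theorem ker_curveParam : RingHom.ker (curveParam (K := K)) = 𝔮 := by
  refine le_antisymm (fun f hf => ?_) curveIdeal_le_ker_curveParam
  rw [← Ideal.Quotient.eq_zero_iff_mem, ← eval₂_curveUnit_comp_curveParam]
  simp [RingHom.mem_ker.mp hf]

theorem isPrime_curveIdeal : (𝔮).IsPrime :=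
  ker_curveParam (K := K) ▸ RingHom.ker_isPrime _

theorem curveParam_X_one_mul_X_two : curveParam (X 1 * X 2 : MvPolynomial (Fin 3) K) = T 1 := by
  simp only [curveParam, map_mul, aeval_X]
  simp only [Matrix.cons_val, ← T_add]
  norm_num

theorem comap_curveIdeal_eq_span_singleton {A : Subalgebra K (MvPolynomial (Fin 3) K)} {u v : A}
    (hgen : Algebra.adjoin K {u, v} = ⊤) (hu : (u : MvPolynomial (Fin 3) K) = X 0 * X 2)
    (hv : (v : MvPolynomial (Fin 3) K) = X 1 * X 2) :
    Ideal.comap (algebraMap A (MvPolynomial (Fin 3) K)) 𝔮 = Ideal.span {u} := by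
  rw [← ker_curveParam]
  refine Eq.trans (Ideal.ext fun _ => Iff.rfl) ?_
  refine (curveParam.comp A.val).ker_eq_span_singleton_of_adjoin_eq_top hgen
    (by simp [curveParam, hu]) ?_
  rw [AlgHom.comp_apply, Subalgebra.coe_val, hv, curveParam_X_one_mul_X_two]
  exact LaurentPolynomial.transcendental_T_one K

theorem isPrime_span_pair {A : Subalgebra K (MvPolynomial (Fin 3) K)} {u v : A}
    (hgen : Algebra.adjoin K {u, v} = ⊤) (hu : (u : MvPolynomial (Fin 3) K) = X 0 * X 2)
    (hv : (v : MvPolynomial (Fin 3) K) = X 1 * X 2) : (Ideal.span {u, v}).IsPrime := by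
  rw [← ((aeval 0).comp A.val).ker_eq_span_pair_of_adjoin_eq_top hgen (by simp [hu])
    (by simp [hv])]
  exact RingHom.ker_isPrime _

end Curve

/-- `(X, Y²Z - 1)B` is prime and contracts to `(XZ) ⊆ A`, but no prime
`q ⊇ (X, Y²Z - 1)B` contracts to `(XZ, YZ) ⊆ A`; in particular `A ⊆ B` does not
satisfy going up. -/
theorem stmt_15 (K : Type*) [Field K]
    (A : Subalgebra K (MvPolynomial (Fin 3) K))
    (hA : A = Algebra.adjoin K ({X 0 * X 2, X 1 * X 2} : Set (MvPolynomial (Fin 3) K)))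
    (u v : A) (hu : (u : MvPolynomial (Fin 3) K) = X 0 * X 2)
    (hv : (v : MvPolynomial (Fin 3) K) = X 1 * X 2) :
    (Ideal.span {X 0, X 1 ^ 2 * X 2 - 1} : Ideal (MvPolynomial (Fin 3) K)).IsPrime ∧
    Ideal.comap (algebraMap A (MvPolynomial (Fin 3) K))
        (Ideal.span {X 0, X 1 ^ 2 * X 2 - 1} : Ideal (MvPolynomial (Fin 3) K)) =
      Ideal.span {u} ∧
    (¬ ∃ q : Ideal (MvPolynomial (Fin 3) K), q.IsPrime ∧
        Ideal.span {X 0, X 1 ^ 2 * X 2 - 1} ≤ q ∧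
        Ideal.comap (algebraMap A (MvPolynomial (Fin 3) K)) q = Ideal.span {u, v}) ∧
    (¬ ∀ (p p' : Ideal A), p.IsPrime → p'.IsPrime → p < p' →
        ∀ q : Ideal (MvPolynomial (Fin 3) K), q.IsPrime →
          Ideal.comap (algebraMap A (MvPolynomial (Fin 3) K)) q = p →
          ∃ q' : Ideal (MvPolynomial (Fin 3) K), q'.IsPrime ∧ q ≤ q' ∧
            Ideal.comap (algebraMap A (MvPolynomial (Fin 3) K)) q' = p') := by
  have hgen := Subalgebra.adjoin_pair_coe_preimage_eq_top hA u v hu hv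
  have hcomap := comap_curveIdeal_eq_span_singleton hgen hu hv
  have hno_prime : ¬ ∃ q : Ideal (MvPolynomial (Fin 3) K), q.IsPrime ∧
      Ideal.span {X 0, X 1 ^ 2 * X 2 - 1} ≤ q ∧
      Ideal.comap (algebraMap A (MvPolynomial (Fin 3) K)) q = Ideal.span {u, v} := by
    rintro ⟨q, hq, hle, hq_comap⟩
    have hv_mem : v ∈ Ideal.comap (algebraMap A _) q := hq_comap ▸ Ideal.subset_span (by simp)
    exact hq.ne_top (eq_top_of_curveIdeal_le hle (hv ▸ hv_mem))
  have hlt : Ideal.span {u} < Ideal.span {u, v} := by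
    refine SetLike.lt_iff_le_and_exists.mpr
      ⟨Ideal.span_mono (by simp), v, Ideal.subset_span (by simp), fun hv_mem => ?_⟩
    rw [← hcomap, Ideal.mem_comap, ← ker_curveParam, RingHom.mem_ker] at hv_mem
    change curveParam (v : MvPolynomial (Fin 3) K) = 0 at hv_mem
    rw [hv, curveParam_X_one_mul_X_two] at hv_mem
    exact (isUnit_T 1).ne_zero hv_mem
  refine ⟨isPrime_curveIdeal, hcomap, hno_prime, fun going_up => hno_prime ?_⟩
  exact going_up _ _ (hcomap ▸ isPrime_curveIdeal.comap _) (isPrime_span_pair hgen hu hv) hlt _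
    isPrime_curveIdeal hcomap
end

section
/- Let $A$ and $B$ be commutative rings, let $\varphi : A \to B$ be a ring homomorphism such that $I = \varphi^{-1}(IB)$ holds for every ideal $I \subseteq A$, and let $\mathfrak{p}_0 \subset \mathfrak{p}_1 \subset \ldots \subset \mathfrak{p}_r$ be a strictly increasing chain of prime ideals of $A$. Set $\mathfrak{a}_i = \mathfrak{p}_i B$ and $F_i = \varphi(A \setminus \mathfrak{p}_i) \subseteq B$, and define $S_{r+1} = \{1\}$ and inductively $S_i = \{s \in B : (sB + \mathfrak{a}_i) \cap F_i \cdot S_{i+1} \neq \emptyset\}$ for $i = r, \ldots, 0$. Then $0 \notin S_0$. -/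
open Pointwise

/-- With `a i = p i · B` and `F i = φ(A \ p i)` for a strictly increasing
chain of primes `p 0 ⊂ … ⊂ p r` of `A`, if every ideal of `A` is contracted from `B`,
then `0 ∉ S 0`. -/
theorem stmt_17 {A B : Type*} [CommRing A] [CommRing B] (φ : A →+* B)
    (hcontr : ∀ I : Ideal A, Ideal.comap φ (Ideal.map φ I) = I)
    (r : ℕ) (p : ℕ → Ideal A) (hp : ∀ i < r, p i < p (i + 1))
    (hprime : ∀ i ≤ r, (p i).IsPrime)
    (a : ℕ → Ideal B) (ha : ∀ i ≤ r, a i = Ideal.map φ (p i))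
    (F : ℕ → Set B) (hF : ∀ i ≤ r, F i = φ '' ((p i : Set A)ᶜ))
    (S : ℕ → Set B) (hStop : S (r + 1) = {1})
    (hSdef : ∀ i ≤ r, S i =
      {s : B | (((Ideal.span {s} ⊔ a i : Ideal B) : Set B) ∩ (F i * S (i + 1))).Nonempty}) :
    (0 : B) ∉ S 0 := by
  -- monotonicity of the chain
  have hmono : ∀ i k, i ≤ k → k ≤ r → p i ≤ p k := by
    intro i k hik
    induction k, hik using Nat.le_induction with
    | base => intro _; exact le_rfl
    | succ k hk ih =>
      intro hkr
      exact le_trans (ih (by omega)) (hp k (by omega)).le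
  -- Key lemma: for every `s ∈ S i` there are `c : A` and an ideal `J` of `A`
  -- containing `p (min i r)` with `φ c ∈ span {s} ⊔ J·B` and `c ∉ J`.
  have key : ∀ n i, i + n = r + 1 → ∀ s ∈ S i, ∃ (c : A) (J : Ideal A),
      φ c ∈ Ideal.span {s} ⊔ J.map φ ∧ c ∉ J ∧ p (min i r) ≤ J := by
    intro n
    induction n with
    | zero =>
      intro i hi s hs
      have hi' : i = r + 1 := by omega
      subst hi'
      rw [hStop] at hs
      have hs1 : s = 1 := hs
      subst hs1
      refine ⟨1, p r, ?_, ?_, ?_⟩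
      · refine Ideal.mem_sup_left ?_; rw [map_one]; exact Ideal.mem_span_singleton_self (1 : B)
      · exact (Ideal.ne_top_iff_one _).mp (hprime r le_rfl).ne_top
      · have h : min (r + 1) r = r := min_eq_right (Nat.le_succ r)
        rw [h]
    | succ n ih =>
      intro i hi s hs
      have hir : i ≤ r := by omega
      rw [hSdef i hir] at hs
      obtain ⟨b, hb1, hb2⟩ := hs
      rw [hF i hir] at hb2
      rw [Set.mem_mul] at hb2
      obtain ⟨f, hf, s', hs', hfs⟩ := hb2
      obtain ⟨t, ht, rfl⟩ := hf
      have ht' : t ∉ p i := ht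
      obtain ⟨c', J', hc', hcJ', hpJ'⟩ := ih (i + 1) (by omega) s' hs'
      have hpiJ' : p i ≤ J' := by
        refine le_trans ?_ hpJ'
        exact hmono i (min (i + 1) r) (le_min (by omega) hir) (min_le_right _ _)
      refine ⟨t * c', p i ⊔ Ideal.span {t} * J', ?_, ?_, ?_⟩
      · -- membership: φ (t c') ∈ span {s} ⊔ (p i + t J')·B
        rw [map_mul]
        obtain ⟨x, hx, y, hy, hxy⟩ := Submodule.mem_sup.mp hc'
        obtain ⟨b₀, hb₀⟩ := Ideal.mem_span_singleton'.mp hx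
        have hdecomp : φ t * φ c' = b₀ * b + φ t * y := by
          rw [← hxy, mul_add, ← hb₀, ← hfs]; ring
        rw [hdecomp]
        have hb1' : b ∈ Ideal.span {s} ⊔ Ideal.map φ (p i) := by
          rwa [ha i hir] at hb1
        have h1 : b₀ * b ∈ Ideal.span {s} ⊔ Ideal.map φ (p i) :=
          Ideal.mul_mem_left _ _ hb1'
        have hle1 : (Ideal.span {s} ⊔ Ideal.map φ (p i) : Ideal B) ≤
            Ideal.span {s} ⊔ (Ideal.map φ (p i ⊔ Ideal.span {t} * J')) :=
          sup_le_sup_left (Ideal.map_mono le_sup_left) _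
        have h2 : φ t * y ∈ Ideal.map φ (Ideal.span {t} * J') := by
          rw [Ideal.map_mul]
          exact Ideal.mul_mem_mul
            (Ideal.mem_map_of_mem φ (Ideal.mem_span_singleton_self t)) hy
        have h2' : φ t * y ∈ Ideal.span {s} ⊔ Ideal.map φ (p i ⊔ Ideal.span {t} * J') :=
          Ideal.mem_sup_right (Ideal.map_mono le_sup_right h2)
        exact Ideal.add_mem _ (hle1 h1) h2'
      · -- t c' ∉ p i + t J'
        intro hmem
        obtain ⟨u, hu, z, hz, huz⟩ := Submodule.mem_sup.mp hmem
        obtain ⟨x, hxJ', hxz⟩ := Ideal.mem_span_singleton_mul.mp hz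
        have htx : t * (c' - x) ∈ p i := by
          have heq : t * (c' - x) = u := by
            rw [mul_sub, hxz, ← huz]; ring
          rw [heq]; exact hu
        rcases (hprime i hir).mem_or_mem htx with h | h
        · exact ht' h
        · apply hcJ'
          have hc'x : c' - x ∈ J' := hpiJ' h
          have : x + (c' - x) ∈ J' := J'.add_mem hxJ' hc'x
          simpa using this
      · have h : min i r = i := min_eq_left hir
        rw [h]
        exact le_sup_left
  -- conclude
  intro h0
  obtain ⟨c, J, h1, h2, _⟩ := key (r + 1) 0 (by omega) 0 h0
  rw [Ideal.span_singleton_eq_bot.mpr rfl, bot_sup_eq] at h1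
  exact h2 (by rw [← hcontr J]; exact h1)
end
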